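/- Slater's identity (5): ∑_{n=0}^∞ (-1)^n q^(n(2n+1)) / ((q²;q²)_n (-q;q²)_{n+1}) = (q;q²)_∞ (-q²;q²)_∞. -/

import Mathlib

noncomputable def qPoch (a q : ℂ) (n : ℕ) : ℂ := ∏ i ∈ Finset.range n, (1 - a * q ^ i)

noncomputable def qPochInf (a q : ℂ) : ℂ := ∏' i : ℕ, (1 - a * q ^ i)

/-!
Put `Q = -q`. Since `(Q;Q)_{2n+1} = (Q²;Q²)_n (Q;Q²)_{n+1}`, the `n`-th term of the series is
`Q^{n(2n+1)} / (Q;Q)_{2n+1}`, which is the sum of the terms of index `2n` and `2n+1` of Euler's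
series `E(z) = ∑ₘ Q^{m(m+1)/2} zᵐ / (Q;Q)ₘ` at `z = 1`. Euler's identity `E(z) = (-zQ;Q)_∞`
follows from the functional equation `E(z) = (1 + zQ) E(zQ)`, iterated `N` times, and the
continuity of `E` at `0`, where `E(0) = 1`. Finally `(-Q;Q)_∞` splits into its factors of odd and
even index, `(-Q;Q²)_∞ (-Q²;Q²)_∞ = (q;q²)_∞ (-q²;q²)_∞`.
-/

open Finset Filter Topology

section QPochhammer

@[simp]
lemma qPoch_zero (a q : ℂ) : qPoch a q 0 = 1 := by
  simp [qPoch]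

lemma qPoch_succ (a q : ℂ) (n : ℕ) : qPoch a q (n + 1) = qPoch a q n * (1 - a * q ^ n) :=
  prod_range_succ _ n

lemma qPoch_self_two_mul_add_one (Q : ℂ) (n : ℕ) :
    qPoch Q Q (2 * n + 1) = qPoch (Q ^ 2) (Q ^ 2) n * qPoch Q (Q ^ 2) (n + 1) := by
  induction n with
  | zero => simp [qPoch_succ]
  | succ n ih =>
    rw [show 2 * (n + 1) + 1 = 2 * n + 1 + 1 + 1 by ring, qPoch_succ, qPoch_succ, ih,
      qPoch_succ (Q ^ 2), qPoch_succ Q (Q ^ 2) (n + 1)]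
    ring

lemma exp_neg_div_le_norm_one_sub {w : ℂ} {r : ℝ} (hw : ‖w‖ ≤ r) (hr : r < 1) :
    Real.exp (-(‖w‖ / (1 - r))) ≤ ‖1 - w‖ := by
  have hw1 : 0 < 1 - ‖w‖ := by linarith
  calc Real.exp (-(‖w‖ / (1 - r))) ≤ Real.exp (1 - (1 - ‖w‖)⁻¹) := by
        gcongr
        rw [show 1 - (1 - ‖w‖)⁻¹ = -(‖w‖ / (1 - ‖w‖)) by field_simp; ring,
          neg_le_neg_iff]
        gcongr
    _ ≤ 1 - ‖w‖ := (Real.le_log_iff_exp_le hw1).1 (Real.one_sub_inv_le_log_of_pos hw1)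
    _ ≤ ‖1 - w‖ := by simpa using norm_sub_norm_le (1 : ℂ) w

lemma exp_neg_le_norm_qPoch {a q : ℂ} (ha : ‖a‖ < 1) (hq : ‖q‖ < 1) (n : ℕ) :
    Real.exp (-(‖a‖ / (1 - ‖a‖) / (1 - ‖q‖))) ≤ ‖qPoch a q n‖ := by
  have hfactor (i : ℕ) :
      Real.exp (-(‖a‖ / (1 - ‖a‖) * ‖q‖ ^ i)) ≤ ‖1 - a * q ^ i‖ := by
    have hle : ‖a * q ^ i‖ ≤ ‖a‖ := by
      rw [norm_mul, norm_pow]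
      exact mul_le_of_le_one_right (norm_nonneg a) (pow_le_one₀ (norm_nonneg q) hq.le)
    calc Real.exp (-(‖a‖ / (1 - ‖a‖) * ‖q‖ ^ i))
          = Real.exp (-(‖a * q ^ i‖ / (1 - ‖a‖))) := by
          rw [norm_mul, norm_pow, div_mul_eq_mul_div]
      _ ≤ ‖1 - a * q ^ i‖ := exp_neg_div_le_norm_one_sub hle ha
  have hgeom : ∑ i ∈ range n, ‖q‖ ^ i ≤ 1 / (1 - ‖q‖) := by
    have := geom_sum_Ico_le_of_lt_one (m := 0) (n := n) (norm_nonneg q) hq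
    rwa [← Finset.range_eq_Ico, pow_zero] at this
  rw [qPoch, norm_prod]
  calc Real.exp (-(‖a‖ / (1 - ‖a‖) / (1 - ‖q‖)))
      ≤ Real.exp (-(‖a‖ / (1 - ‖a‖) * ∑ i ∈ range n, ‖q‖ ^ i)) := by
        rw [← mul_one_div _ (1 - ‖q‖)]
        gcongr
    _ = ∏ i ∈ range n, Real.exp (-(‖a‖ / (1 - ‖a‖) * ‖q‖ ^ i)) := by
        rw [← Real.exp_sum, mul_sum, sum_neg_distrib]
    _ ≤ ∏ i ∈ range n, ‖1 - a * q ^ i‖ :=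
        prod_le_prod (fun i _ => (Real.exp_pos _).le) fun i _ => hfactor i

lemma qPoch_ne_zero {a q : ℂ} (ha : ‖a‖ < 1) (hq : ‖q‖ < 1) (n : ℕ) :
    qPoch a q n ≠ 0 :=
  norm_pos_iff.1 ((Real.exp_pos _).trans_le (exp_neg_le_norm_qPoch ha hq n))

lemma one_sub_mul_pow_ne_zero {a q : ℂ} (ha : ‖a‖ < 1) (hq : ‖q‖ < 1) (n : ℕ) :
    1 - a * q ^ n ≠ 0 := by
  have h := qPoch_ne_zero ha hq (n + 1)
  rw [qPoch_succ] at h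
  exact right_ne_zero_of_mul h

lemma multipliable_one_sub_mul_pow (a : ℂ) {q : ℂ} (hq : ‖q‖ < 1) :
    Multipliable fun i : ℕ => 1 - a * q ^ i := by
  simp_rw [sub_eq_add_neg]
  refine multipliable_one_add_of_summable ?_
  simp_rw [norm_neg, norm_mul, norm_pow]
  exact (summable_geometric_of_lt_one (norm_nonneg q) hq).mul_left ‖a‖

lemma tendsto_qPoch_qPochInf (a : ℂ) {q : ℂ} (hq : ‖q‖ < 1) :
    Tendsto (qPoch a q) atTop (𝓝 (qPochInf a q)) :=
  (multipliable_one_sub_mul_pow a hq).hasProd.tendsto_prod_nat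

lemma qPochInf_neg_self (Q : ℂ) (hQ : ‖Q‖ < 1) :
    qPochInf (-Q) Q = qPochInf (-Q) (Q ^ 2) * qPochInf (-Q ^ 2) (Q ^ 2) := by
  have hQ2 : ‖Q ^ 2‖ < 1 := by rw [norm_pow]; exact pow_lt_one₀ (norm_nonneg Q) hQ two_ne_zero
  have heven (k : ℕ) : 1 - -Q * Q ^ (2 * k) = 1 - -Q * (Q ^ 2) ^ k := by rw [pow_mul]
  have hodd (k : ℕ) : 1 - -Q * Q ^ (2 * k + 1) = 1 - -Q ^ 2 * (Q ^ 2) ^ k := by ring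
  unfold qPochInf
  rw [← tprod_even_mul_odd (f := fun i => 1 - -Q * Q ^ i)
    ((multipliable_one_sub_mul_pow _ hQ2).congr fun k => (heven k).symm)
    ((multipliable_one_sub_mul_pow _ hQ2).congr fun k => (hodd k).symm)]
  simp only [heven, hodd]

end QPochhammer

section Euler

variable {Q z : ℂ}

noncomputable def eulerCoeff (Q : ℂ) (m : ℕ) : ℂ := Q ^ (m + 1).choose 2 / qPoch Q Q m

noncomputable def eulerSum (Q z : ℂ) : ℂ := ∑' m, eulerCoeff Q m * z ^ m

lemma choose_two_add_two (m : ℕ) : (m + 2).choose 2 = (m + 1).choose 2 + (m + 1) := by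
  rw [Nat.choose_succ_succ' (m + 1) 1, Nat.choose_one_right, add_comm]

lemma le_choose_two_succ (m : ℕ) : m ≤ (m + 1).choose 2 := by
  induction m with
  | zero => simp
  | succ m ih => rw [choose_two_add_two]; omega

lemma eulerCoeff_zero : eulerCoeff Q 0 = 1 := by
  simp [eulerCoeff]

lemma eulerCoeff_succ_mul (hQ : ‖Q‖ < 1) (m : ℕ) :
    eulerCoeff Q (m + 1) * (1 - Q * Q ^ m) = Q ^ (m + 1) * eulerCoeff Q m := by
  have h := qPoch_ne_zero hQ hQ m
  have h' := one_sub_mul_pow_ne_zero hQ hQ m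
  unfold eulerCoeff
  rw [choose_two_add_two, qPoch_succ, pow_add]
  field_simp

lemma eulerCoeff_two_mul_add_eulerCoeff (hQ : ‖Q‖ < 1) (n : ℕ) :
    eulerCoeff Q (2 * n) + eulerCoeff Q (2 * n + 1) =
      Q ^ (n * (2 * n + 1)) / qPoch Q Q (2 * n + 1) := by
  have hchoose : (2 * n + 1).choose 2 = n * (2 * n + 1) := by
    rw [Nat.choose_two_right, Nat.add_sub_cancel,
      show (2 * n + 1) * (2 * n) = 2 * (n * (2 * n + 1)) by ring,
      Nat.mul_div_cancel_left _ two_pos]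
  have h := qPoch_ne_zero hQ hQ (2 * n)
  have h' := one_sub_mul_pow_ne_zero hQ hQ (2 * n)
  unfold eulerCoeff
  rw [choose_two_add_two, hchoose, qPoch_succ, pow_add]
  field_simp
  ring

lemma norm_eulerCoeff_mul_pow_le (hQ : ‖Q‖ < 1) (hz : ‖z‖ ≤ 1) (m : ℕ) :
    ‖eulerCoeff Q m * z ^ m‖ ≤
      ‖Q‖ ^ m / Real.exp (-(‖Q‖ / (1 - ‖Q‖) / (1 - ‖Q‖))) := by
  rw [norm_mul, eulerCoeff, norm_div, norm_pow, norm_pow]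
  refine (mul_le_of_le_one_right (by positivity) (pow_le_one₀ (norm_nonneg z) hz)).trans ?_
  exact div_le_div₀ (by positivity)
    (pow_le_pow_of_le_one (norm_nonneg Q) hQ.le (le_choose_two_succ m))
    (Real.exp_pos _) (exp_neg_le_norm_qPoch hQ hQ m)

lemma summable_eulerCoeff_mul_pow (hQ : ‖Q‖ < 1) (hz : ‖z‖ ≤ 1) :
    Summable fun m => eulerCoeff Q m * z ^ m :=
  Summable.of_norm_bounded ((summable_geometric_of_lt_one (norm_nonneg Q) hQ).div_const _)
    (norm_eulerCoeff_mul_pow_le hQ hz)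

lemma continuousOn_eulerSum (hQ : ‖Q‖ < 1) :
    ContinuousOn (eulerSum Q) (Metric.closedBall 0 1) :=
  continuousOn_tsum (fun m => by fun_prop)
    ((summable_geometric_of_lt_one (norm_nonneg Q) hQ).div_const _)
    fun m z hz => norm_eulerCoeff_mul_pow_le hQ (by simpa using hz) m

lemma eulerSum_zero (Q : ℂ) : eulerSum Q 0 = 1 := by
  rw [eulerSum, tsum_eq_single 0 fun m hm => by simp [hm]]
  simp [eulerCoeff_zero]

lemma norm_mul_pow_le_one {x y : ℂ} (hx : ‖x‖ ≤ 1) (hy : ‖y‖ ≤ 1) (n : ℕ) :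
    ‖x * y ^ n‖ ≤ 1 := by
  rw [norm_mul, norm_pow]
  exact mul_le_one₀ hx (by positivity) (pow_le_one₀ (norm_nonneg y) hy)

lemma eulerSum_eq_mul_eulerSum (hQ : ‖Q‖ < 1) (hz : ‖z‖ ≤ 1) :
    eulerSum Q z = (1 + z * Q) * eulerSum Q (z * Q) := by
  have hzQ : ‖z * Q‖ ≤ 1 := by simpa using norm_mul_pow_le_one hz hQ.le 1
  have hs := summable_eulerCoeff_mul_pow hQ hz
  have hs' := summable_eulerCoeff_mul_pow hQ hzQ
  suffices eulerSum Q z - eulerSum Q (z * Q) = z * Q * eulerSum Q (z * Q) by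
    linear_combination this
  rw [eulerSum, eulerSum, ← hs.tsum_sub hs', (hs.sub hs').tsum_eq_zero_add, ← tsum_mul_left]
  simp only [pow_zero, sub_self, zero_add]
  refine tsum_congr fun m => ?_
  calc eulerCoeff Q (m + 1) * z ^ (m + 1) - eulerCoeff Q (m + 1) * (z * Q) ^ (m + 1)
      = eulerCoeff Q (m + 1) * (1 - Q * Q ^ m) * z ^ (m + 1) := by ring
    _ = Q ^ (m + 1) * eulerCoeff Q m * z ^ (m + 1) := by rw [eulerCoeff_succ_mul hQ]
    _ = z * Q * (eulerCoeff Q m * (z * Q) ^ m) := by ring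

lemma eulerSum_eq_qPoch_mul (hQ : ‖Q‖ < 1) (hz : ‖z‖ ≤ 1) (N : ℕ) :
    eulerSum Q z = qPoch (-(z * Q)) Q N * eulerSum Q (z * Q ^ N) := by
  induction N with
  | zero => simp
  | succ N ih =>
    rw [ih, eulerSum_eq_mul_eulerSum hQ (norm_mul_pow_le_one hz hQ.le N), qPoch_succ, pow_succ,
      mul_assoc z]
    ring

theorem eulerSum_eq_qPochInf (hQ : ‖Q‖ < 1) (hz : ‖z‖ ≤ 1) :
    eulerSum Q z = qPochInf (-(z * Q)) Q := by
  have hzQN : Tendsto (fun N => z * Q ^ N) atTop (𝓝[Metric.closedBall 0 1] 0) := by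
    refine tendsto_nhdsWithin_iff.2 ⟨?_, Eventually.of_forall fun N => ?_⟩
    · simpa using (tendsto_pow_atTop_nhds_zero_of_norm_lt_one hQ).const_mul z
    · exact mem_closedBall_zero_iff.2 (norm_mul_pow_le_one hz hQ.le N)
  have hlim := (tendsto_qPoch_qPochInf (-(z * Q)) hQ).mul
    (eulerSum_zero Q ▸ ((continuousOn_eulerSum hQ) 0 (by simp)).tendsto.comp hzQN)
  simp_rw [Function.comp_def, ← eulerSum_eq_qPoch_mul hQ hz, mul_one] at hlim
  exact tendsto_nhds_unique tendsto_const_nhds hlim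

lemma eulerSum_one (hQ : ‖Q‖ < 1) :
    eulerSum Q 1 = ∑' n : ℕ, Q ^ (n * (2 * n + 1)) / qPoch Q Q (2 * n + 1) := by
  have hs : Summable (eulerCoeff Q) := by
    simpa using summable_eulerCoeff_mul_pow hQ (z := 1) (by simp)
  have he : Summable fun k => eulerCoeff Q (2 * k) := hs.comp_injective fun _ _ h => by omega
  have ho : Summable fun k => eulerCoeff Q (2 * k + 1) := hs.comp_injective fun _ _ h => by omega
  simp only [eulerSum, one_pow, mul_one]
  rw [← tsum_even_add_odd he ho, ← he.tsum_add ho]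
  exact tsum_congr (eulerCoeff_two_mul_add_eulerCoeff hQ)

end Euler

theorem stmt12 (q : ℂ) (hq : ‖q‖ < 1) :
    ∑' n : ℕ, (-1 : ℂ) ^ n * q ^ (n * (2 * n + 1)) / (qPoch (q ^ 2) (q ^ 2) n * qPoch (-q) (q ^ 2) (n + 1))
      = qPochInf q (q ^ 2) * qPochInf (-q ^ 2) (q ^ 2) := by
  have hQ : ‖-q‖ < 1 := by rwa [norm_neg]
  have hterm (n : ℕ) : (-1 : ℂ) ^ n * q ^ (n * (2 * n + 1))
      / (qPoch (q ^ 2) (q ^ 2) n * qPoch (-q) (q ^ 2) (n + 1))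
      = (-q) ^ (n * (2 * n + 1)) / qPoch (-q) (-q) (2 * n + 1) := by
    rw [qPoch_self_two_mul_add_one, neg_sq, neg_pow q,
      show n * (2 * n + 1) = n + 2 * (n * n) by ring,
      pow_add (-1 : ℂ), pow_mul, neg_one_sq, one_pow, mul_one]
  calc _ = ∑' n : ℕ, (-q) ^ (n * (2 * n + 1)) / qPoch (-q) (-q) (2 * n + 1) := tsum_congr hterm
    _ = qPochInf (-(1 * -q)) (-q) := by rw [← eulerSum_one hQ, eulerSum_eq_qPochInf hQ (by simp)]
    _ = _ := by rw [one_mul, qPochInf_neg_self _ hQ, neg_neg, neg_sq]
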